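/- arXiv:2206.01352 — 7 statements merged into one kernel-verified Lean document; each statement's English description precedes it below -/
import Mathlib

section
/- Let B̂ be a global minimizer of L₁ over ℝ^{p×q} and fix an index pair (j,k) with x_j ≠ 0. Suppose that every group g ∈ 𝒢 containing (j,k) satisfies ‖B̂_g‖₂ > 0 (the paper states this condition equivalently as √(Σ_{(j',k')∈g} ((|S_{j'k'}(B̂)|/n − λ₁ w_{j'})₊)²) > λ_g v_g for every such group). Then β̂_jk = sgn(S_jk(B̂)) · (|S_jk(B̂)| − n λ₁ w_j)₊ / ( ‖x_j‖₂² + n · Σ_{g ∈ 𝒢 : (j,k) ∈ g} λ_g v_g / ‖B̂_g‖₂ ). -/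
/-!
Along the line `t ↦ B̂` with entry `(j, k)` replaced by `t`, the objective is `f t + λ₁ w_j |t|`
plus a constant. Since every group norm containing `(j, k)` is positive at `B̂`, `f` is
differentiable at `t₀ = β̂_jk`, and because `S_jk` does not involve row `j` of `B`,
`n f'(t₀) = (‖x_j‖² + n σ) t₀ - S_jk` with `σ = Σ_{g ∋ (j,k)} λ_g v_g / ‖B̂_g‖₂`.
Fermat's rule for `f + λ|·|` (`f'(t₀) + λ sgn t₀ = 0` if `t₀ ≠ 0`, `|f'(0)| ≤ λ` otherwise) is then
exactly the soft-thresholding equation for `t₀`.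
-/

open Finset Function

section SoftThreshold

open Filter Topology

theorem HasDerivAt.neg_le_of_eventually_le_add_mul {f : ℝ → ℝ} {d c : ℝ} (hf : HasDerivAt f d 0)
    (h : ∀ᶠ t in 𝓝[>] 0, f 0 ≤ f t + c * t) : -c ≤ d := by
  refine ge_of_tendsto (by simpa using hf.tendsto_slope_zero_right) ?_
  filter_upwards [h, self_mem_nhdsWithin] with t ht (htpos : 0 < t)
  rw [inv_mul_eq_div, le_div_iff₀ htpos]
  linarith

theorem IsLocalMin.add_mul_sign_eq_zero_of_hasDerivAt {f : ℝ → ℝ} {d lam t₀ : ℝ}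
    (hmin : IsLocalMin (fun t => f t + lam * |t|) t₀) (hf : HasDerivAt f d t₀) (ht₀ : t₀ ≠ 0) :
    d + lam * Real.sign t₀ = 0 := by
  have := hmin.hasDerivAt_eq_zero (hf.add ((hasDerivAt_abs ht₀).const_mul lam))
  rcases ht₀.lt_or_gt with h | h <;> simpa [h, Real.sign_of_neg, Real.sign_of_pos] using this

theorem IsLocalMin.abs_le_of_add_mul_abs_of_hasDerivAt {f : ℝ → ℝ} {d lam : ℝ}
    (hmin : IsLocalMin (fun t => f t + lam * |t|) 0) (hf : HasDerivAt f d 0) : |d| ≤ lam := by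
  have hright : ∀ᶠ t in 𝓝[>] 0, f 0 ≤ f t + lam * t := by
    filter_upwards [hmin.filter_mono nhdsWithin_le_nhds, self_mem_nhdsWithin]
      with t ht (htpos : 0 < t)
    simpa [abs_of_pos htpos] using ht
  have hleft : ∀ᶠ t in 𝓝[>] 0, f (-0) ≤ f (-t) + lam * t := by
    have hneg : Tendsto Neg.neg (𝓝[>] (0 : ℝ)) (𝓝 0) :=
      (continuous_neg.tendsto' 0 0 neg_zero).mono_left nhdsWithin_le_nhds
    filter_upwards [hneg.eventually hmin, self_mem_nhdsWithin] with t ht (htpos : 0 < t)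
    simpa [abs_of_pos htpos] using ht
  have hneg : HasDerivAt (fun t => f (-t)) (-d) 0 := by
    have hf' : HasDerivAt f d (-0) := by rwa [neg_zero]
    have := hf'.comp 0 (hasDerivAt_neg 0)
    rwa [mul_neg_one] at this
  rw [abs_le]
  constructor
  · exact hf.neg_le_of_eventually_le_add_mul hright
  · linarith [hneg.neg_le_of_eventually_le_add_mul hleft]

theorem eq_softThreshold_of_isLocalMin {f : ℝ → ℝ} {A b lam t₀ : ℝ} (hA : 0 < A) (hlam : 0 ≤ lam)
    (hf : HasDerivAt f (A * t₀ - b) t₀) (hmin : IsLocalMin (fun t => f t + lam * |t|) t₀) :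
    t₀ = Real.sign b * max (|b| - lam) 0 / A := by
  rcases lt_trichotomy t₀ 0 with ht₀ | rfl | ht₀
  · have hb := hmin.add_mul_sign_eq_zero_of_hasDerivAt hf ht₀.ne
    rw [Real.sign_of_neg ht₀] at hb
    have hbneg : b < 0 := by nlinarith
    rw [Real.sign_of_neg hbneg, abs_of_neg hbneg, max_eq_left (by nlinarith)]
    field_simp
    linarith
  · have hb := hmin.abs_le_of_add_mul_abs_of_hasDerivAt hf
    rw [mul_zero, zero_sub, abs_neg] at hb
    rw [max_eq_right (by linarith), mul_zero, zero_div]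
  · have hb := hmin.add_mul_sign_eq_zero_of_hasDerivAt hf ht₀.ne'
    rw [Real.sign_of_pos ht₀] at hb
    have hbpos : 0 < b := by nlinarith
    rw [Real.sign_of_pos hbpos, abs_of_pos hbpos, max_eq_left (by nlinarith)]
    field_simp
    linarith

end SoftThreshold

section CoordinateUpdate

variable {ι : Type*} [DecidableEq ι]

theorem Finset.sum_apply_update_of_mem {α M : Type*} [AddCommMonoid M] {s : Finset ι} {i : ι}
    (hi : i ∈ s) (φ : ι → α → M) (u : ι → α) (t : α) :
    ∑ x ∈ s, φ x (update u i t x) = φ i t + ∑ x ∈ s.erase i, φ x (u x) := by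
  rw [← add_sum_erase s _ hi, update_self]
  congr 1
  exact sum_congr rfl fun x hx => by rw [update_of_ne (ne_of_mem_erase hx)]

theorem Finset.sum_apply_update_of_notMem {α M : Type*} [AddCommMonoid M] {s : Finset ι} {i : ι}
    (hi : i ∉ s) (φ : ι → α → M) (u : ι → α) (t : α) :
    ∑ x ∈ s, φ x (update u i t x) = ∑ x ∈ s, φ x (u x) :=
  sum_congr rfl fun x hx => by rw [update_of_ne (ne_of_mem_of_not_mem hx hi)]

theorem hasDerivAt_sqrt_sum_sq_update {s : Finset ι} {i : ι} (hi : i ∈ s) (u : ι → ℝ)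
    (hpos : 0 < √(∑ x ∈ s, u x ^ 2)) :
    HasDerivAt (fun t => √(∑ x ∈ s, update u i t x ^ 2)) (u i / √(∑ x ∈ s, u x ^ 2)) (u i) := by
  have hsum : ∑ x ∈ s, u x ^ 2 = u i ^ 2 + ∑ x ∈ s.erase i, u x ^ 2 :=
    (add_sum_erase s _ hi).symm
  simp only [sum_apply_update_of_mem hi (fun _ v => v ^ 2)]
  rw [hsum] at hpos ⊢
  have := ((hasDerivAt_pow 2 (u i)).add_const (∑ x ∈ s.erase i, u x ^ 2)).sqrt
    (Real.sqrt_pos.mp hpos).ne'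
  convert this using 1
  field_simp
  ring

theorem hasDerivAt_sum_mul_sqrt_sum_sq_update (𝒢 : Finset (Finset ι)) (μ : Finset ι → ℝ)
    (u : ι → ℝ) (i : ι) (hpos : ∀ g ∈ 𝒢, i ∈ g → 0 < √(∑ x ∈ g, u x ^ 2)) :
    HasDerivAt (fun t => ∑ g ∈ 𝒢, μ g * √(∑ x ∈ g, update u i t x ^ 2))
      (u i * ∑ g ∈ 𝒢 with i ∈ g, μ g / √(∑ x ∈ g, u x ^ 2)) (u i) := by
  have hterm : ∀ g ∈ 𝒢, HasDerivAt (fun t => μ g * √(∑ x ∈ g, update u i t x ^ 2))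
      (if i ∈ g then u i * (μ g / √(∑ x ∈ g, u x ^ 2)) else 0) (u i) := by
    intro g hg
    by_cases hig : i ∈ g
    · rw [if_pos hig, mul_div_left_comm]
      exact (hasDerivAt_sqrt_sum_sq_update hig u (hpos g hg hig)).const_mul (μ g)
    · simp only [if_neg hig, sum_apply_update_of_notMem hig (fun _ v => v ^ 2)]
      exact hasDerivAt_const _ _
  refine (HasDerivAt.fun_sum hterm).congr_deriv ?_
  rw [sum_ite, sum_const_zero, add_zero, mul_sum]

end CoordinateUpdate

theorem hasDerivAt_sum_sq_sub_mul {ι : Type*} [Fintype ι] (x r : ι → ℝ) (t : ℝ) :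
    HasDerivAt (fun t => ∑ i, (r i - x i * t) ^ 2)
      (2 * ((∑ i, x i ^ 2) * t - ∑ i, x i * r i)) t := by
  have hterm : ∀ i ∈ (univ : Finset ι), HasDerivAt (fun t => (r i - x i * t) ^ 2)
      (2 * (r i - x i * t) * -x i) t := fun i _ => by
    simpa using (((hasDerivAt_id t).const_mul (x i)).const_sub (r i)).fun_pow 2
  refine (HasDerivAt.fun_sum hterm).congr_deriv ?_
  simp only [mul_sum, sum_mul, ← sum_sub_distrib]
  exact sum_congr rfl fun i _ => by ring

namespace Matrix

variable {m κ α : Type*} [DecidableEq m] [DecidableEq κ]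

def updateEntry (B : Matrix m κ α) (i : m) (j : κ) (a : α) : Matrix m κ α :=
  of fun i' j' => update (fun x : m × κ => B x.1 x.2) (i, j) a (i', j')

@[simp]
theorem updateEntry_apply (B : Matrix m κ α) (i : m) (j : κ) (a : α) (i' : m) (j' : κ) :
    B.updateEntry i j a i' j' = update (fun x : m × κ => B x.1 x.2) (i, j) a (i', j') :=
  rfl

@[simp]
theorem updateEntry_self (B : Matrix m κ α) (i : m) (j : κ) : B.updateEntry i j (B i j) = B := by
  ext i' j'
  simp only [updateEntry_apply, update_eq_self]

theorem updateEntry_apply_col (B : Matrix m κ α) (i : m) (j : κ) (a : α) (i' : m) :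
    B.updateEntry i j a i' j = update (fun i' => B i' j) i a i' :=
  congrFun
    (update_comp_eq_of_injective (fun x : m × κ => B x.1 x.2) (Prod.mk_left_injective j) i a) i'

theorem updateEntry_apply_of_ne (B : Matrix m κ α) (i : m) {j j' : κ} (a : α) (h : j' ≠ j)
    (i' : m) : B.updateEntry i j a i' j' = B i' j' := by
  rw [updateEntry_apply, update_of_ne (by simp [h])]

end Matrix

section SparseGroupLasso

variable {n p q : ℕ} (X : Matrix (Fin n) (Fin p) ℝ) (Y : Matrix (Fin n) (Fin q) ℝ)

def partialResidual (B : Matrix (Fin p) (Fin q) ℝ) (j : Fin p) (k : Fin q) (i : Fin n) : ℝ :=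
  Y i k - ∑ j', if j' = j then 0 else X i j' * B j' k

theorem sub_sum_mul_updateEntry_col (B : Matrix (Fin p) (Fin q) ℝ) (j : Fin p) (k : Fin q)
    (t : ℝ) (i : Fin n) :
    Y i k - ∑ j', X i j' * B.updateEntry j k t j' k = partialResidual X Y B j k i - X i j * t := by
  have hsplit : ∀ j', X i j' * update (fun j' => B j' k) j t j'
      = (if j' = j then X i j * t else 0) + if j' = j then 0 else X i j' * B j' k := by
    intro j'
    by_cases h : j' = j
    · subst h; simp
    · simp [h]
  simp only [B.updateEntry_apply_col]
  rw [sum_congr rfl fun j' _ => hsplit j', sum_add_distrib, sum_ite_eq' univ j, if_pos (mem_univ j),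
    partialResidual]
  ring

theorem hasDerivAt_sum_sq_residual_updateEntry (B : Matrix (Fin p) (Fin q) ℝ) (j : Fin p)
    (k : Fin q) (t : ℝ) :
    HasDerivAt (fun t => ∑ i, ∑ k', (Y i k' - ∑ j', X i j' * B.updateEntry j k t j' k') ^ 2)
      (2 * ((∑ i, X i j ^ 2) * t - ∑ i, X i j * partialResidual X Y B j k i)) t := by
  have hsplit : ∀ s i, ∑ k', (Y i k' - ∑ j', X i j' * B.updateEntry j k s j' k') ^ 2
      = (partialResidual X Y B j k i - X i j * s) ^ 2
        + ∑ k' ∈ univ.erase k, (Y i k' - ∑ j', X i j' * B j' k') ^ 2 := by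
    intro s i
    rw [← add_sum_erase _ _ (mem_univ k), sub_sum_mul_updateEntry_col]
    congr 1
    refine sum_congr rfl fun k' hk' => ?_
    simp only [B.updateEntry_apply_of_ne j s (ne_of_mem_erase hk')]
  simp only [hsplit, sum_add_distrib]
  exact (hasDerivAt_sum_sq_sub_mul _ _ t).add_const _

noncomputable def sparseGroupLassoObjective (lam1 : ℝ) (w : Fin p → ℝ)
    (𝒢 : Finset (Finset (Fin p × Fin q))) (lamg vg : Finset (Fin p × Fin q) → ℝ)
    (B : Matrix (Fin p) (Fin q) ℝ) : ℝ :=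
  (1 / (2 * (n : ℝ))) * ∑ i, ∑ k, (Y i k - ∑ j, X i j * B j k) ^ 2
    + ∑ j, ∑ k, lam1 * w j * |B j k|
    + ∑ g ∈ 𝒢, lamg g * vg g * √(∑ jk ∈ g, (B jk.1 jk.2) ^ 2)

theorem hasDerivAt_sparseGroupLassoObjective_updateEntry_sub_abs (hn : (n : ℝ) ≠ 0) (lam1 : ℝ)
    (w : Fin p → ℝ) (𝒢 : Finset (Finset (Fin p × Fin q))) (lamg vg : Finset (Fin p × Fin q) → ℝ)
    (B : Matrix (Fin p) (Fin q) ℝ) (j : Fin p) (k : Fin q)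
    (hgroups : ∀ g ∈ 𝒢, (j, k) ∈ g → 0 < √(∑ jk ∈ g, (B jk.1 jk.2) ^ 2)) :
    HasDerivAt
      (fun t => sparseGroupLassoObjective X Y lam1 w 𝒢 lamg vg (B.updateEntry j k t)
        - lam1 * w j * |t|)
      (((∑ i, X i j ^ 2
          + n * ∑ g ∈ 𝒢 with (j, k) ∈ g, lamg g * vg g / √(∑ jk ∈ g, (B jk.1 jk.2) ^ 2)) * B j k
        - ∑ i, X i j * partialResidual X Y B j k i) / n) (B j k) := by
  set u : Fin p × Fin q → ℝ := fun x => B x.1 x.2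
  set C := ∑ x ∈ univ.erase (j, k), lam1 * w x.1 * |u x|
  have hlasso : ∀ t, ∑ j', ∑ k', lam1 * w j' * |B.updateEntry j k t j' k'|
      = lam1 * w j * |t| + C := fun t => by
    simp only [Matrix.updateEntry_apply]
    rw [← Fintype.sum_prod_type' (fun j' k' => lam1 * w j' * |update u (j, k) t (j', k')|),
      sum_apply_update_of_mem (mem_univ (j, k)) (fun x v => lam1 * w x.1 * |v|)]
  have hQ := (hasDerivAt_sum_sq_residual_updateEntry X Y B j k (B j k)).const_mul
    (1 / (2 * (n : ℝ)))
  have hG := hasDerivAt_sum_mul_sqrt_sum_sq_update 𝒢 (fun g => lamg g * vg g) u (j, k) hgroups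
  refine (((hQ.add_const C).add hG).congr_deriv ?_).congr_of_eventuallyEq
    (Filter.Eventually.of_forall fun t => ?_)
  · field_simp
    ring
  · simp only [sparseGroupLassoObjective, hlasso, Pi.add_apply]
    simp only [Matrix.updateEntry_apply, Prod.mk.eta]
    ring

end SparseGroupLasso

theorem jointModel_beta_hat_formula_general
    (n p q : ℕ) (hn : 0 < n)
    (X : Matrix (Fin n) (Fin p) ℝ) (Y : Matrix (Fin n) (Fin q) ℝ)
    (lam1 : ℝ) (hlam1 : 0 ≤ lam1)
    (w : Fin p → ℝ) (hw : ∀ j, 0 ≤ w j)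
    (𝒢 : Finset (Finset (Fin p × Fin q)))
    (lamg vg : Finset (Fin p × Fin q) → ℝ)
    (hlamg : ∀ g ∈ 𝒢, 0 ≤ lamg g) (hvg : ∀ g ∈ 𝒢, 0 ≤ vg g)
    (L1 : Matrix (Fin p) (Fin q) ℝ → ℝ)
    (hL1 : ∀ B, L1 B =
      (1 / (2 * (n : ℝ))) * ∑ i, ∑ k, (Y i k - ∑ j, X i j * B j k) ^ 2
      + ∑ j, ∑ k, lam1 * w j * |B j k|
      + ∑ g ∈ 𝒢, lamg g * vg g * Real.sqrt (∑ jk ∈ g, (B jk.1 jk.2) ^ 2))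
    (S : Matrix (Fin p) (Fin q) ℝ → Fin p → Fin q → ℝ)
    (hS : ∀ B j k, S B j k =
      ∑ i, X i j * (Y i k - ∑ j', (if j' = j then 0 else X i j' * B j' k)))
    (Bhat : Matrix (Fin p) (Fin q) ℝ)
    (hmin : ∀ B, L1 Bhat ≤ L1 B)
    (j : Fin p) (k : Fin q)
    (hx : (fun i => X i j) ≠ 0)
    (hgroups : ∀ g ∈ 𝒢, (j, k) ∈ g →
      0 < Real.sqrt (∑ jk ∈ g, (Bhat jk.1 jk.2) ^ 2)) :
    Bhat j k =
      Real.sign (S Bhat j k) * max (|S Bhat j k| - (n : ℝ) * lam1 * w j) 0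
      / ((∑ i, (X i j) ^ 2)
        + (n : ℝ) * ∑ g ∈ 𝒢.filter (fun g => (j, k) ∈ g),
            lamg g * vg g / Real.sqrt (∑ jk ∈ g, (Bhat jk.1 jk.2) ^ 2)) := by
  obtain rfl : L1 = sparseGroupLassoObjective X Y lam1 w 𝒢 lamg vg := funext hL1
  have hn' : (n : ℝ) ≠ 0 := by positivity
  have hcol : 0 < ∑ i, X i j ^ 2 := by
    obtain ⟨i, hi⟩ := Function.ne_iff.mp hx
    exact sum_pos' (fun i _ => sq_nonneg _) ⟨i, mem_univ i, sq_pos_of_ne_zero hi⟩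
  have hgroup : 0 ≤ ∑ g ∈ 𝒢 with (j, k) ∈ g, lamg g * vg g / √(∑ jk ∈ g, (Bhat jk.1 jk.2) ^ 2) :=
    sum_nonneg fun g hg => div_nonneg
      (mul_nonneg (hlamg g (mem_filter.mp hg).1) (hvg g (mem_filter.mp hg).1)) (Real.sqrt_nonneg _)
  have hlocal : IsLocalMin (fun t => n * (sparseGroupLassoObjective X Y lam1 w 𝒢 lamg vg
      (Bhat.updateEntry j k t) - lam1 * w j * |t|) + n * lam1 * w j * |t|) (Bhat j k) :=
    Filter.Eventually.of_forall fun t => by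
      have := mul_le_mul_of_nonneg_left (hmin (Bhat.updateEntry j k t)) (Nat.cast_nonneg n)
      simp only [Matrix.updateEntry_self]
      linarith
  rw [hS]
  exact eq_softThreshold_of_isLocalMin
    (add_pos_of_pos_of_nonneg hcol (mul_nonneg (Nat.cast_nonneg n) hgroup))
    (mul_nonneg (mul_nonneg (Nat.cast_nonneg n) hlam1) (hw j))
    (((hasDerivAt_sparseGroupLassoObjective_updateEntry_sub_abs X Y hn' lam1 w 𝒢 lamg vg Bhat j k
      hgroups).const_mul (n : ℝ)).congr_deriv (mul_div_cancel₀ _ hn'))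
    hlocal

/-- closed-form expression for a nonzero coordinate of a global
minimizer of the weighted sparse group lasso objective L₁ (Model 1),
when every group containing the index `(j,k)` has positive norm. -/
theorem jointModel_beta_hat_formula
    (n p q : ℕ) (hn : 0 < n) (hp : 0 < p) (hq : 0 < q)
    (X : Matrix (Fin n) (Fin p) ℝ) (Y : Matrix (Fin n) (Fin q) ℝ)
    (lam1 : ℝ) (hlam1 : 0 ≤ lam1)
    (w : Fin p → ℝ) (hw : ∀ j, 0 ≤ w j)
    (𝒢 : Finset (Finset (Fin p × Fin q)))
    (lamg vg : Finset (Fin p × Fin q) → ℝ)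
    (hlamg : ∀ g ∈ 𝒢, 0 ≤ lamg g) (hvg : ∀ g ∈ 𝒢, 0 ≤ vg g)
    (L1 : Matrix (Fin p) (Fin q) ℝ → ℝ)
    (hL1 : ∀ B, L1 B =
      (1 / (2 * (n : ℝ))) * ∑ i, ∑ k, (Y i k - ∑ j, X i j * B j k) ^ 2
      + ∑ j, ∑ k, lam1 * w j * |B j k|
      + ∑ g ∈ 𝒢, lamg g * vg g * Real.sqrt (∑ jk ∈ g, (B jk.1 jk.2) ^ 2))
    (S : Matrix (Fin p) (Fin q) ℝ → Fin p → Fin q → ℝ)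
    (hS : ∀ B j k, S B j k =
      ∑ i, X i j * (Y i k - ∑ j', (if j' = j then 0 else X i j' * B j' k)))
    (Bhat : Matrix (Fin p) (Fin q) ℝ)
    (hmin : ∀ B, L1 Bhat ≤ L1 B)
    (j : Fin p) (k : Fin q)
    (hx : (fun i => X i j) ≠ 0)
    (hgroups : ∀ g ∈ 𝒢, (j, k) ∈ g →
      0 < Real.sqrt (∑ jk ∈ g, (Bhat jk.1 jk.2) ^ 2)) :
    Bhat j k =
      Real.sign (S Bhat j k) * max (|S Bhat j k| - (n : ℝ) * lam1 * w j) 0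
      / ((∑ i, (X i j) ^ 2)
        + (n : ℝ) * ∑ g ∈ 𝒢.filter (fun g => (j, k) ∈ g),
            lamg g * vg g / Real.sqrt (∑ jk ∈ g, (Bhat jk.1 jk.2) ^ 2)) :=
  jointModel_beta_hat_formula_general n p q hn X Y lam1 hlam1 w hw 𝒢 lamg vg hlamg hvg L1 hL1 S hS
    Bhat hmin j k hx hgroups
end

section
/- Let Ĝ be a global minimizer of L₂ over ℝ^p and fix an index j with x_j ≠ 0. Suppose that every group g ∈ 𝒢 containing j satisfies ‖Ĝ_g‖₂ > 0 (the paper states this condition equivalently as √(Σ_{j'∈g} ((|S_{j'}'(Ĝ)|/n − λ₂ u_{j'})₊)²) > λ_g v_g for every such group). Then γ̂_j = sgn(S_j'(Ĝ)) · (|S_j'(Ĝ)| − n λ₂ u_j)₊ / ( ‖x_j‖₂² + n · Σ_{g ∈ 𝒢 : j ∈ g} λ_g v_g / ‖Ĝ_g‖₂ ). -/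
open Finset Set

/-!
Along the coordinate line `t ↦ Function.update Ĝ j t` (`Function.update Ĝ j 0` is the paper's
`Ĝ^{(-j)}`), `n • L₂` is, up to a constant, `φ t + n λ₂ u_j |t|` with
`φ t = ‖x_j‖² t² / 2 - S_j'(Ĝ) t + ∑_{g ∋ j} n λ_g v_g √(t² + ‖Ĝ^{(-j)}_g‖²)`.
Every group through `j` has positive norm at `Ĝ`, so `φ` is differentiable at `γ̂_j` with
derivative `γ̂_j D - S_j'(Ĝ)`, where `D` is the denominator of the formula. Fermat's rule for
`φ + b |·|` (one-sided at `0`) says that `S_j'(Ĝ) - γ̂_j D` is a subgradient of `b |·|` at `γ̂_j`,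
and solving this for `γ̂_j` is soft-thresholding.
-/

noncomputable def softThreshold (b s : ℝ) : ℝ := Real.sign s * max (|s| - b) 0

theorem eq_softThreshold_div {t s b D : ℝ} (hD : 0 < D) (hb : 0 ≤ b)
    (hzero : t = 0 → |t * D - s| ≤ b) (hne : t ≠ 0 → t * D - s + b * Real.sign t = 0) :
    t = softThreshold b s / D := by
  rw [softThreshold, eq_div_iff hD.ne']
  rcases lt_trichotomy t 0 with ht | rfl | ht
  · have h := hne ht.ne
    rw [Real.sign_of_neg ht] at h
    have hs : s < 0 := by nlinarith
    rw [Real.sign_of_neg hs, abs_of_neg hs, max_eq_left (by nlinarith)]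
    linarith
  · have h := hzero rfl
    rw [zero_mul, zero_sub, abs_neg] at h
    rw [max_eq_right (by linarith)]
    simp
  · have h := hne ht.ne'
    rw [Real.sign_of_pos ht] at h
    have hs : 0 < s := by nlinarith
    rw [Real.sign_of_pos hs, abs_of_pos hs, max_eq_left (by nlinarith)]
    linarith

theorem IsLocalMinOn.hasDerivWithinAt_Ici_nonneg {f : ℝ → ℝ} {f' a : ℝ}
    (h : IsLocalMinOn f (Ici a) a) (hf : HasDerivWithinAt f f' (Ici a) a) : 0 ≤ f' := by
  have hcone : (1 : ℝ) ∈ posTangentConeAt (Ici a) a :=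
    mem_posTangentConeAt_of_segment_subset (by simp [segment_eq_Icc, Set.Icc_subset_Ici_self])
  simpa using h.hasFDerivWithinAt_nonneg hf.hasFDerivWithinAt hcone

theorem neg_le_of_hasDerivAt_of_forall_le_add_abs {φ : ℝ → ℝ} {d b : ℝ}
    (hφ : HasDerivAt φ d 0) (hmin : ∀ t, φ 0 ≤ φ t + b * |t|) : -b ≤ d := by
  have hderiv : HasDerivAt (fun t => φ t + b * t) (d + b) 0 :=
    (hφ.add ((hasDerivAt_id 0).const_mul b)).congr_deriv (by simp)
  have hloc : IsLocalMinOn (fun t => φ t + b * t) (Ici 0) 0 :=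
    IsMinOn.localize fun t (ht : 0 ≤ t) => by simpa [abs_of_nonneg ht] using hmin t
  linarith [hloc.hasDerivWithinAt_Ici_nonneg hderiv.hasDerivWithinAt]

theorem abs_le_of_hasDerivAt_of_forall_le_add_abs {φ : ℝ → ℝ} {d b : ℝ}
    (hφ : HasDerivAt φ d 0) (hmin : ∀ t, φ 0 ≤ φ t + b * |t|) : |d| ≤ b := by
  have hφneg : HasDerivAt (fun t => φ (-t)) (-d) 0 := by
    have hφ' : HasDerivAt φ d (-0) := by rwa [neg_zero]
    exact (hφ'.comp 0 (hasDerivAt_neg 0)).congr_deriv (by simp)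
  have hleft := neg_le_of_hasDerivAt_of_forall_le_add_abs hφneg fun t => by
    simpa using hmin (-t)
  exact abs_le.2 ⟨neg_le_of_hasDerivAt_of_forall_le_add_abs hφ hmin, by linarith⟩

theorem add_mul_sign_eq_zero_of_hasDerivAt {φ : ℝ → ℝ} {d b x : ℝ} (hx : x ≠ 0)
    (hφ : HasDerivAt φ d x) (hmin : ∀ t, φ x + b * |x| ≤ φ t + b * |t|) :
    d + b * Real.sign x = 0 := by
  have hsign : (SignType.sign x : ℝ) = Real.sign x := by
    rcases hx.lt_or_gt with h | h
    · simp [_root_.sign_neg h, Real.sign_of_neg h]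
    · simp [_root_.sign_pos h, Real.sign_of_pos h]
  have hloc : IsLocalMin (fun t => φ t + b * |t|) x := Filter.Eventually.of_forall hmin
  exact hloc.hasDerivAt_eq_zero
    ((hφ.add ((hasDerivAt_abs hx).const_mul b)).congr_deriv (by rw [hsign]))

theorem eq_softThreshold_div_of_hasDerivAt {φ : ℝ → ℝ} {x s b D : ℝ} (hD : 0 < D) (hb : 0 ≤ b)
    (hφ : HasDerivAt φ (x * D - s) x) (hmin : ∀ t, φ x + b * |x| ≤ φ t + b * |t|) :
    x = softThreshold b s / D :=
  eq_softThreshold_div hD hb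
    (fun hx => by
      subst hx
      exact abs_le_of_hasDerivAt_of_forall_le_add_abs hφ (by simpa using hmin))
    (fun hx => add_mul_sign_eq_zero_of_hasDerivAt hx hφ hmin)

theorem hasDerivAt_sqrt_sq_add {c t : ℝ} (h : 0 < t ^ 2 + c) :
    HasDerivAt (fun t => √(t ^ 2 + c)) (t / √(t ^ 2 + c)) t :=
  (((hasDerivAt_pow 2 t).add_const c).sqrt h.ne').congr_deriv (by field_simp; ring)

theorem hasDerivAt_quadratic_add_sum_sqrt {ι : Type*} (F : Finset ι) {a s x : ℝ} {w c : ι → ℝ}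
    (hc : ∀ g ∈ F, 0 < x ^ 2 + c g) :
    HasDerivAt (fun t => a / 2 * t ^ 2 - s * t + ∑ g ∈ F, w g * √(t ^ 2 + c g))
      (x * (a + ∑ g ∈ F, w g / √(x ^ 2 + c g)) - s) x := by
  have hquad : HasDerivAt (fun t => a / 2 * t ^ 2 - s * t) (a * x - s) x :=
    (((hasDerivAt_pow 2 x).const_mul (a / 2)).sub ((hasDerivAt_id x).const_mul s)).congr_deriv
      (by simp; ring)
  have hsum := HasDerivAt.fun_sum fun g hg => (hasDerivAt_sqrt_sq_add (hc g hg)).const_mul (w g)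
  refine (hquad.add hsum).congr_deriv ?_
  simp only [mul_add, Finset.mul_sum, mul_div_left_comm x]
  ring

section CoordinateLine

variable {ι α M : Type*} [DecidableEq ι] [AddCommMonoid M]

theorem Finset.sum_apply_update_of_mem_s2 [Zero α] {s : Finset ι} {j : ι} (hj : j ∈ s)
    (f : ι → α → M) (hf : f j 0 = 0) (G : ι → α) (t : α) :
    ∑ k ∈ s, f k (Function.update G j t k) = f j t + ∑ k ∈ s, f k (Function.update G j 0 k) := by
  simp only [Function.apply_update f, Finset.sum_update_of_mem hj, hf, zero_add]

theorem Finset.sum_apply_update_of_notMem_s2 {s : Finset ι} {j : ι} (hj : j ∉ s) (f : ι → α → M)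
    (G : ι → α) (t : α) :
    ∑ k ∈ s, f k (Function.update G j t k) = ∑ k ∈ s, f k (G k) := by
  simp only [Function.apply_update f, Finset.sum_update_of_notMem hj]

theorem sum_mul_sqrt_sum_sq_update (𝒢 : Finset (Finset ι)) (w : Finset ι → ℝ) (G : ι → ℝ)
    (j : ι) (t : ℝ) :
    ∑ g ∈ 𝒢, w g * √(∑ k ∈ g, Function.update G j t k ^ 2)
      = ∑ g ∈ 𝒢 with j ∈ g, w g * √(t ^ 2 + ∑ k ∈ g, Function.update G j 0 k ^ 2)
        + ∑ g ∈ 𝒢 with j ∉ g, w g * √(∑ k ∈ g, G k ^ 2) := by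
  rw [← sum_filter_add_sum_filter_not 𝒢 (j ∈ ·)]
  congr 1 <;> refine sum_congr rfl fun g hg => ?_
  · rw [Finset.sum_apply_update_of_mem_s2 (mem_filter.1 hg).2 (fun _ x => x ^ 2) (by simp)]
  · rw [Finset.sum_apply_update_of_notMem_s2 (mem_filter.1 hg).2 (fun _ x => x ^ 2)]

theorem sum_sq_sub_sum_mul_update [Fintype ι] {m : Type*} [Fintype m] (X : Matrix m ι ℝ)
    (Z : m → ℝ) (G : ι → ℝ) (j : ι) (t : ℝ) :
    ∑ i, (Z i - ∑ k, X i k * Function.update G j t k) ^ 2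
      = t ^ 2 * ∑ i, X i j ^ 2 - 2 * t * ∑ i, X i j * (Z i - ∑ k, X i k * Function.update G j 0 k)
        + ∑ i, (Z i - ∑ k, X i k * Function.update G j 0 k) ^ 2 := by
  have hrow : ∀ i, ∑ k, X i k * Function.update G j t k
      = X i j * t + ∑ k, X i k * Function.update G j 0 k := fun i =>
    Finset.sum_apply_update_of_mem_s2 (mem_univ j) (fun k x => X i k * x) (mul_zero _) G t
  simp only [hrow, Finset.mul_sum, ← Finset.sum_sub_distrib, ← Finset.sum_add_distrib]
  exact sum_congr rfl fun i _ => by ring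

end CoordinateLine

section SparseGroupLasso

variable {ι : Type*} [Fintype ι] {n : ℕ} (X : Matrix (Fin n) ι ℝ) (Z : Fin n → ℝ) (lam2 : ℝ)
  (u : ι → ℝ) (𝒢 : Finset (Finset ι)) (lamg vg : Finset ι → ℝ)

noncomputable def sparseGroupLassoLoss (G : ι → ℝ) : ℝ :=
  (1 / (2 * (n : ℝ))) * ∑ i, (Z i - ∑ j, X i j * G j) ^ 2
    + ∑ j, lam2 * u j * |G j|
    + ∑ g ∈ 𝒢, lamg g * vg g * Real.sqrt (∑ j ∈ g, (G j) ^ 2)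

variable [DecidableEq ι]

def partialCorrelation (G : ι → ℝ) (j : ι) : ℝ :=
  ∑ i, X i j * (Z i - ∑ k, X i k * Function.update G j 0 k)

noncomputable def coordinateProfile (G : ι → ℝ) (j : ι) (t : ℝ) : ℝ :=
  ((∑ i, X i j ^ 2) / 2 * t ^ 2 - partialCorrelation X Z G j * t
    + ∑ g ∈ 𝒢 with j ∈ g, n * (lamg g * vg g) * √(t ^ 2 + ∑ k ∈ g, Function.update G j 0 k ^ 2))
  + n * lam2 * u j * |t|

variable {X Z lam2 u 𝒢 lamg vg}

theorem exists_mul_sparseGroupLassoLoss_update_eq (hn : 0 < n) (G : ι → ℝ) (j : ι) :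
    ∃ K, ∀ t, n * sparseGroupLassoLoss X Z lam2 u 𝒢 lamg vg (Function.update G j t)
      = coordinateProfile X Z lam2 u 𝒢 lamg vg G j t + K := by
  refine ⟨(1 / 2) * ∑ i, (Z i - ∑ k, X i k * Function.update G j 0 k) ^ 2
    + n * ∑ k, lam2 * u k * |Function.update G j 0 k|
    + n * ∑ g ∈ 𝒢 with j ∉ g, lamg g * vg g * √(∑ k ∈ g, G k ^ 2), fun t => ?_⟩
  have hn' : (n : ℝ) ≠ 0 := Nat.cast_ne_zero.2 hn.ne'
  rw [sparseGroupLassoLoss, sum_sq_sub_sum_mul_update, sum_mul_sqrt_sum_sq_update,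
    Finset.sum_apply_update_of_mem_s2 (mem_univ j) (fun k x => lam2 * u k * |x|) (by simp),
    coordinateProfile, partialCorrelation]
  simp only [mul_assoc, ← Finset.mul_sum]
  field_simp
  ring

theorem coordinateProfile_le_of_forall_le (hn : 0 < n) {G : ι → ℝ}
    (hG : ∀ G', sparseGroupLassoLoss X Z lam2 u 𝒢 lamg vg G
      ≤ sparseGroupLassoLoss X Z lam2 u 𝒢 lamg vg G')
    (j : ι) (t : ℝ) :
    coordinateProfile X Z lam2 u 𝒢 lamg vg G j (G j)
      ≤ coordinateProfile X Z lam2 u 𝒢 lamg vg G j t := by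
  obtain ⟨K, hK⟩ := exists_mul_sparseGroupLassoLoss_update_eq (X := X) (Z := Z) (lam2 := lam2)
    (u := u) (𝒢 := 𝒢) (lamg := lamg) (vg := vg) hn G j
  have hK₀ := hK (G j)
  rw [Function.update_eq_self] at hK₀
  linarith [hK t, mul_le_mul_of_nonneg_left (hG (Function.update G j t)) (Nat.cast_nonneg n)]

end SparseGroupLasso

theorem jointModel_gamma_hat_formula_general
    (n p : ℕ) (hn : 0 < n)
    (X : Matrix (Fin n) (Fin p) ℝ) (Z : Fin n → ℝ)
    (lam2 : ℝ) (hlam2 : 0 ≤ lam2)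
    (u : Fin p → ℝ) (hu : ∀ j, 0 ≤ u j)
    (𝒢 : Finset (Finset (Fin p)))
    (lamg vg : Finset (Fin p) → ℝ)
    (hlamg : ∀ g ∈ 𝒢, 0 ≤ lamg g) (hvg : ∀ g ∈ 𝒢, 0 ≤ vg g)
    (L2 : (Fin p → ℝ) → ℝ)
    (hL2 : ∀ G, L2 G =
      (1 / (2 * (n : ℝ))) * ∑ i, (Z i - ∑ j, X i j * G j) ^ 2
      + ∑ j, lam2 * u j * |G j|
      + ∑ g ∈ 𝒢, lamg g * vg g * Real.sqrt (∑ j ∈ g, (G j) ^ 2))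
    (S' : (Fin p → ℝ) → Fin p → ℝ)
    (hS' : ∀ G j, S' G j =
      ∑ i, X i j * (Z i - ∑ j', (if j' = j then 0 else X i j' * G j')))
    (Ghat : Fin p → ℝ)
    (hmin : ∀ G, L2 Ghat ≤ L2 G)
    (j : Fin p)
    (hx : (fun i => X i j) ≠ 0)
    (hgroups : ∀ g ∈ 𝒢, j ∈ g → 0 < Real.sqrt (∑ j' ∈ g, (Ghat j') ^ 2)) :
    Ghat j =
      Real.sign (S' Ghat j) * max (|S' Ghat j| - (n : ℝ) * lam2 * u j) 0
      / ((∑ i, (X i j) ^ 2)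
        + (n : ℝ) * ∑ g ∈ 𝒢.filter (fun g => j ∈ g),
            lamg g * vg g / Real.sqrt (∑ j' ∈ g, (Ghat j') ^ 2)) := by
  have hL : L2 = sparseGroupLassoLoss X Z lam2 u 𝒢 lamg vg := funext hL2
  have hS : S' Ghat j = partialCorrelation X Z Ghat j := by
    simp only [hS', partialCorrelation, Function.update_apply, mul_ite, mul_zero]
  set c : Finset (Fin p) → ℝ := fun g => ∑ k ∈ g, Function.update Ghat j 0 k ^ 2
  have hnorm : ∀ g ∈ 𝒢.filter (j ∈ ·), ∑ k ∈ g, Ghat k ^ 2 = Ghat j ^ 2 + c g := fun g hg => by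
    simpa using Finset.sum_apply_update_of_mem_s2 (mem_filter.1 hg).2 (fun _ x => x ^ 2) (by simp)
      Ghat (Ghat j)
  have hc : ∀ g ∈ 𝒢.filter (j ∈ ·), 0 < Ghat j ^ 2 + c g := fun g hg => by
    rw [← hnorm g hg]
    exact Real.sqrt_pos.1 (hgroups g (mem_filter.1 hg).1 (mem_filter.1 hg).2)
  have hA : 0 < ∑ i, X i j ^ 2 := by
    obtain ⟨i, hi⟩ := Function.ne_iff.1 hx
    exact sum_pos' (fun i _ => sq_nonneg _) ⟨i, mem_univ i, sq_pos_of_ne_zero hi⟩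
  have hD : 0 < ∑ i, X i j ^ 2
      + ∑ g ∈ 𝒢.filter (j ∈ ·), n * (lamg g * vg g) / √(Ghat j ^ 2 + c g) := by
    refine add_pos_of_pos_of_nonneg hA (sum_nonneg fun g hg => ?_)
    have := hlamg g (mem_filter.1 hg).1
    have := hvg g (mem_filter.1 hg).1
    positivity
  refine (eq_softThreshold_div_of_hasDerivAt hD
    (mul_nonneg (mul_nonneg n.cast_nonneg hlam2) (hu j))
    (hasDerivAt_quadratic_add_sum_sqrt _ hc)
    (coordinateProfile_le_of_forall_le hn (hL ▸ hmin) j)).trans ?_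
  rw [softThreshold, hS, Finset.mul_sum]
  congr 2
  exact sum_congr rfl fun g hg => by rw [hnorm g hg, mul_div_assoc]

/-- closed-form expression for a nonzero coordinate of a global
minimizer of the weighted sparse group lasso objective L₂ (Model 2),
when every group containing the index `j` has positive norm. -/
theorem jointModel_gamma_hat_formula
    (n p : ℕ) (hn : 0 < n) (hp : 0 < p)
    (X : Matrix (Fin n) (Fin p) ℝ) (Z : Fin n → ℝ)
    (lam2 : ℝ) (hlam2 : 0 ≤ lam2)
    (u : Fin p → ℝ) (hu : ∀ j, 0 ≤ u j)
    (𝒢 : Finset (Finset (Fin p)))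
    (lamg vg : Finset (Fin p) → ℝ)
    (hlamg : ∀ g ∈ 𝒢, 0 ≤ lamg g) (hvg : ∀ g ∈ 𝒢, 0 ≤ vg g)
    (L2 : (Fin p → ℝ) → ℝ)
    (hL2 : ∀ G, L2 G =
      (1 / (2 * (n : ℝ))) * ∑ i, (Z i - ∑ j, X i j * G j) ^ 2
      + ∑ j, lam2 * u j * |G j|
      + ∑ g ∈ 𝒢, lamg g * vg g * Real.sqrt (∑ j ∈ g, (G j) ^ 2))
    (S' : (Fin p → ℝ) → Fin p → ℝ)
    (hS' : ∀ G j, S' G j =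
      ∑ i, X i j * (Z i - ∑ j', (if j' = j then 0 else X i j' * G j')))
    (Ghat : Fin p → ℝ)
    (hmin : ∀ G, L2 Ghat ≤ L2 G)
    (j : Fin p)
    (hx : (fun i => X i j) ≠ 0)
    (hgroups : ∀ g ∈ 𝒢, j ∈ g → 0 < Real.sqrt (∑ j' ∈ g, (Ghat j') ^ 2)) :
    Ghat j =
      Real.sign (S' Ghat j) * max (|S' Ghat j| - (n : ℝ) * lam2 * u j) 0
      / ((∑ i, (X i j) ^ 2)
        + (n : ℝ) * ∑ g ∈ 𝒢.filter (fun g => j ∈ g),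
            lamg g * vg g / Real.sqrt (∑ j' ∈ g, (Ghat j') ^ 2)) :=
  jointModel_gamma_hat_formula_general n p hn X Z lam2 hlam2 u hu 𝒢 lamg vg hlamg hvg L2 hL2 S' hS'
    Ghat hmin j hx hgroups
end

section
/- Let B̂ be a global minimizer of L₁ over ℝ^{p×q} and fix an index pair (j,k). Suppose β̂_jk ≠ 0 and every group g ∈ 𝒢 containing (j,k) satisfies ‖B̂_g‖₂ > 0. Then the stationarity equation (1/n) S_jk(B̂) = (1/n) ‖x_j‖₂² β̂_jk + λ₁ w_j sgn(β̂_jk) + Σ_{g ∈ 𝒢 : (j,k) ∈ g} λ_g v_g β̂_jk / ‖B̂_g‖₂ holds. -/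
/-!
Only the `(j, k)` coordinate is perturbed: `t ↦ L₁ (B̂ + t • E_jk)` is minimal at `t = 0`
and is differentiable there, the `ℓ₁` term because `β̂_jk ≠ 0` and each group norm because
the group either misses `(j, k)`, so that the norm is constant, or has positive norm.
Fermat's rule makes the derivative vanish, and `S_jk(B̂) = x_jᵀ (Y - X B̂)_{·k} + ‖x_j‖² β̂_jk`
turns this into the stationarity equation.
-/

section
variable {ι : Type*} (s : Finset ι) (a b : ι → ℝ)

theorem hasDerivAt_sum_sq_add_mul :
    HasDerivAt (fun t => ∑ i ∈ s, (a i + t * b i) ^ 2) (2 * ∑ i ∈ s, a i * b i) 0 := by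
  have h : ∀ i ∈ s, HasDerivAt (fun t => (a i + t * b i) ^ 2) (2 * (a i * b i)) 0 := by
    intro i _
    simpa [mul_assoc] using (((hasDerivAt_id 0).mul_const (b i)).const_add (a i)).fun_pow 2
  simpa [Finset.mul_sum] using HasDerivAt.fun_sum h

theorem hasDerivAt_sqrt_sum_sq_add_mul (h : 0 < ∑ i ∈ s, a i ^ 2) :
    HasDerivAt (fun t => √(∑ i ∈ s, (a i + t * b i) ^ 2))
      ((∑ i ∈ s, a i * b i) / √(∑ i ∈ s, a i ^ 2)) 0 := by
  have hsq := hasDerivAt_sum_sq_add_mul s a b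
  have := hsq.sqrt (by simpa using h.ne')
  convert this using 1
  simp only [zero_mul, add_zero]
  field_simp

end

theorem hasDerivAt_abs_add_mul {a b : ℝ} (h : a ≠ 0 ∨ b = 0) :
    HasDerivAt (fun t => |a + t * b|) (Real.sign a * b) 0 := by
  rcases h with ha | rfl
  · have hd : HasDerivAt (fun t => a + t * b) b 0 := by
      simpa using ((hasDerivAt_id (0 : ℝ)).mul_const b).const_add a
    rcases ha.lt_or_gt with ha | ha
    · rw [Real.sign_of_neg ha]
      exact (hasDerivAt_abs_neg (by simpa using ha)).comp 0 hd
    · rw [Real.sign_of_pos ha]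
      exact (hasDerivAt_abs_pos (by simpa using ha)).comp 0 hd
  · simpa using hasDerivAt_const (0 : ℝ) |a|

theorem sum_mul_sub_sum_ite_eq {l m n : Type*} [Fintype l] [Fintype m] [DecidableEq m]
    (X : Matrix l m ℝ) (Y : Matrix l n ℝ) (B : Matrix m n ℝ) (j : m) (k : n) :
    ∑ i, X i j * (Y i k - ∑ j', if j' = j then 0 else X i j' * B j' k)
      = ∑ i, X i j * (Y i k - ∑ j', X i j' * B j' k) + (∑ i, X i j ^ 2) * B j k := by
  simp only [Finset.sum_ite, Finset.sum_const_zero, zero_add, Finset.filter_ne',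
    Finset.sum_erase_eq_sub (Finset.mem_univ j), Finset.sum_mul, ← Finset.sum_add_distrib]
  refine Finset.sum_congr rfl fun i _ => ?_
  ring

section
variable {l m n : Type*} [DecidableEq m] [DecidableEq n] (B : Matrix m n ℝ) (j : m) (k : n)

theorem hasDerivAt_sqrt_sum_sq_add_smul_single (g : Finset (m × n))
    (hg : (j, k) ∈ g → 0 < ∑ x ∈ g, B x.1 x.2 ^ 2) :
    HasDerivAt
      (fun t : ℝ => √(∑ x ∈ g, (B + t • Matrix.single j k (1 : ℝ)) x.1 x.2 ^ 2))
      (if (j, k) ∈ g then B j k / √(∑ x ∈ g, B x.1 x.2 ^ 2) else 0) 0 := by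
  have hsingle :
      ∀ x : m × n, Matrix.single j k (1 : ℝ) x.1 x.2 = if (j, k) = x then 1 else 0 := by
    simp [Matrix.single_apply, Prod.ext_iff]
  split_ifs with hjk
  · have hBE : ∑ x ∈ g, B x.1 x.2 * Matrix.single j k (1 : ℝ) x.1 x.2 = B j k := by
      simp [hsingle, hjk]
    have := hasDerivAt_sqrt_sum_sq_add_mul g (fun x => B x.1 x.2)
      (fun x => Matrix.single j k (1 : ℝ) x.1 x.2) (hg hjk)
    rwa [hBE] at this
  · refine (hasDerivAt_const (0 : ℝ) √(∑ x ∈ g, B x.1 x.2 ^ 2)).congr_of_eventuallyEq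
      (Filter.Eventually.of_forall fun t => congrArg _ (Finset.sum_congr rfl fun x hx => ?_))
    have : (j, k) ≠ x := fun h => hjk (h ▸ hx)
    rw [Matrix.add_apply, Matrix.smul_apply, hsingle, if_neg this, smul_zero, add_zero]

variable [Fintype m] [Fintype n]

theorem hasDerivAt_sum_mul_abs_add_smul_single (c : m → ℝ) (h : B j k ≠ 0) :
    HasDerivAt
      (fun t : ℝ => ∑ j', ∑ k', c j' * |(B + t • Matrix.single j k (1 : ℝ)) j' k'|)
      (c j * Real.sign (B j k)) 0 := by
  have hentry : ∀ j' k',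
      HasDerivAt (fun t : ℝ => c j' * |(B + t • Matrix.single j k (1 : ℝ)) j' k'|)
      (c j' * (Real.sign (B j' k') * Matrix.single j k (1 : ℝ) j' k')) 0 := by
    intro j' k'
    refine (hasDerivAt_abs_add_mul ?_).const_mul (c j')
    by_cases hjk : j = j' ∧ k = k'
    · obtain ⟨rfl, rfl⟩ := hjk
      exact Or.inl h
    · exact Or.inr (Matrix.single_apply_of_ne _ _ _ _ _ hjk)
  refine (HasDerivAt.fun_sum fun j' _ => HasDerivAt.fun_sum fun k' _ => hentry j' k').congr_deriv ?_
  simp [Matrix.single_apply, ite_and]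

theorem hasDerivAt_sum_sq_residual_add_smul_single [Fintype l]
    (X : Matrix l m ℝ) (Y : Matrix l n ℝ) :
    HasDerivAt
      (fun t : ℝ => ∑ i, ∑ k',
        (Y i k' - ∑ j', X i j' * (B + t • Matrix.single j k (1 : ℝ)) j' k') ^ 2)
      (-2 * ∑ i, X i j * (Y i k - ∑ j', X i j' * B j' k)) 0 := by
  have hres : ∀ (t : ℝ) i k',
      Y i k' - ∑ j', X i j' * (B + t • Matrix.single j k (1 : ℝ)) j' k'
        = (Y - X * B) i k' + t * -(X * Matrix.single j k (1 : ℝ)) i k' := by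
    intro t i k'
    change Y i k' - (X * (B + t • Matrix.single j k (1 : ℝ))) i k' = _
    simp only [Matrix.mul_add, Matrix.mul_smul, Matrix.add_apply, Matrix.smul_apply,
      Matrix.sub_apply, smul_eq_mul]
    ring
  simp_rw [hres, ← Fintype.sum_prod_type' (fun i k' => ((Y - X * B) i k' + _ * _) ^ 2)]
  convert hasDerivAt_sum_sq_add_mul Finset.univ (fun x : l × n => (Y - X * B) x.1 x.2)
    (fun x : l × n => -(X * Matrix.single j k (1 : ℝ)) x.1 x.2) using 1
  rw [Fintype.sum_prod_type, Finset.mul_sum, Finset.mul_sum]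
  refine Finset.sum_congr rfl fun i _ => ?_
  rw [Finset.sum_eq_single k (fun k' _ hk' => by simp [hk']) (by simp)]
  rw [Matrix.mul_single_apply_same, Matrix.sub_apply, Matrix.mul_apply]
  ring

end

theorem jointModel_stationarity_equation_general
    (n p q : ℕ)
    (X : Matrix (Fin n) (Fin p) ℝ) (Y : Matrix (Fin n) (Fin q) ℝ)
    (lam1 : ℝ)
    (w : Fin p → ℝ)
    (𝒢 : Finset (Finset (Fin p × Fin q)))
    (lamg vg : Finset (Fin p × Fin q) → ℝ)
    (L1 : Matrix (Fin p) (Fin q) ℝ → ℝ)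
    (hL1 : ∀ B, L1 B =
      (1 / (2 * (n : ℝ))) * ∑ i, ∑ k, (Y i k - ∑ j, X i j * B j k) ^ 2
      + ∑ j, ∑ k, lam1 * w j * |B j k|
      + ∑ g ∈ 𝒢, lamg g * vg g * Real.sqrt (∑ jk ∈ g, (B jk.1 jk.2) ^ 2))
    (S : Matrix (Fin p) (Fin q) ℝ → Fin p → Fin q → ℝ)
    (hS : ∀ B j k, S B j k =
      ∑ i, X i j * (Y i k - ∑ j', (if j' = j then 0 else X i j' * B j' k)))
    (Bhat : Matrix (Fin p) (Fin q) ℝ)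
    (hmin : ∀ B, L1 Bhat ≤ L1 B)
    (j : Fin p) (k : Fin q)
    (hjk : Bhat j k ≠ 0)
    (hgroups : ∀ g ∈ 𝒢, (j, k) ∈ g →
      0 < Real.sqrt (∑ jk ∈ g, (Bhat jk.1 jk.2) ^ 2)) :
    (1 / (n : ℝ)) * S Bhat j k =
      (1 / (n : ℝ)) * (∑ i, (X i j) ^ 2) * Bhat j k
      + lam1 * w j * Real.sign (Bhat j k)
      + ∑ g ∈ 𝒢.filter (fun g => (j, k) ∈ g),
          lamg g * vg g * Bhat j k
            / Real.sqrt (∑ jk ∈ g, (Bhat jk.1 jk.2) ^ 2) := by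
  have hderiv : HasDerivAt (fun t : ℝ => L1 (Bhat + t • Matrix.single j k 1))
      (1 / (2 * (n : ℝ)) * (-2 * ∑ i, X i j * (Y i k - ∑ j', X i j' * Bhat j' k))
        + lam1 * w j * Real.sign (Bhat j k)
        + ∑ g ∈ 𝒢, lamg g * vg g *
            (if (j, k) ∈ g then Bhat j k / √(∑ x ∈ g, Bhat x.1 x.2 ^ 2) else 0)) 0 := by
    simp only [hL1]
    exact (((hasDerivAt_sum_sq_residual_add_smul_single Bhat j k X Y).const_mul _).add
      (hasDerivAt_sum_mul_abs_add_smul_single Bhat j k (fun j' => lam1 * w j') hjk)).add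
      (HasDerivAt.fun_sum fun g hg => (hasDerivAt_sqrt_sum_sq_add_smul_single Bhat j k g
        fun hjkg => Real.sqrt_pos.mp (hgroups g hg hjkg)).const_mul _)
  have hmin0 : IsLocalMin (fun t : ℝ => L1 (Bhat + t • Matrix.single j k 1)) 0 :=
    Filter.Eventually.of_forall fun t => by simpa using hmin _
  have hstat := hmin0.hasDerivAt_eq_zero hderiv
  rw [hS, sum_mul_sub_sum_ite_eq, Finset.sum_filter]
  simp only [mul_ite, mul_zero, mul_div_assoc] at hstat ⊢
  linear_combination -hstat

/-- stationarity (KKT) equation at a nonzero coordinate of a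
global minimizer of the weighted sparse group lasso objective L₁ (Model 1),
when every group containing `(j,k)` has positive norm. -/
theorem jointModel_stationarity_equation
    (n p q : ℕ) (hn : 0 < n) (hp : 0 < p) (hq : 0 < q)
    (X : Matrix (Fin n) (Fin p) ℝ) (Y : Matrix (Fin n) (Fin q) ℝ)
    (lam1 : ℝ) (hlam1 : 0 ≤ lam1)
    (w : Fin p → ℝ) (hw : ∀ j, 0 ≤ w j)
    (𝒢 : Finset (Finset (Fin p × Fin q)))
    (lamg vg : Finset (Fin p × Fin q) → ℝ)
    (hlamg : ∀ g ∈ 𝒢, 0 ≤ lamg g) (hvg : ∀ g ∈ 𝒢, 0 ≤ vg g)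
    (L1 : Matrix (Fin p) (Fin q) ℝ → ℝ)
    (hL1 : ∀ B, L1 B =
      (1 / (2 * (n : ℝ))) * ∑ i, ∑ k, (Y i k - ∑ j, X i j * B j k) ^ 2
      + ∑ j, ∑ k, lam1 * w j * |B j k|
      + ∑ g ∈ 𝒢, lamg g * vg g * Real.sqrt (∑ jk ∈ g, (B jk.1 jk.2) ^ 2))
    (S : Matrix (Fin p) (Fin q) ℝ → Fin p → Fin q → ℝ)
    (hS : ∀ B j k, S B j k =
      ∑ i, X i j * (Y i k - ∑ j', (if j' = j then 0 else X i j' * B j' k)))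
    (Bhat : Matrix (Fin p) (Fin q) ℝ)
    (hmin : ∀ B, L1 Bhat ≤ L1 B)
    (j : Fin p) (k : Fin q)
    (hjk : Bhat j k ≠ 0)
    (hgroups : ∀ g ∈ 𝒢, (j, k) ∈ g →
      0 < Real.sqrt (∑ jk ∈ g, (Bhat jk.1 jk.2) ^ 2)) :
    (1 / (n : ℝ)) * S Bhat j k =
      (1 / (n : ℝ)) * (∑ i, (X i j) ^ 2) * Bhat j k
      + lam1 * w j * Real.sign (Bhat j k)
      + ∑ g ∈ 𝒢.filter (fun g => (j, k) ∈ g),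
          lamg g * vg g * Bhat j k
            / Real.sqrt (∑ jk ∈ g, (Bhat jk.1 jk.2) ^ 2) :=
  jointModel_stationarity_equation_general n p q X Y lam1 w 𝒢 lamg vg L1 hL1 S hS Bhat hmin j k hjk
    hgroups
end

section
/- The function f has a unique global minimizer over ℝ, given by the soft-thresholding formula β̂ = sgn(S) · (|S| − λ)₊ / a. -/
lemma soft_key (a lam S : ℝ) (ha : 0 < a) (hlam : 0 ≤ lam) (β : ℝ) :
    a / 2 * (Real.sign S * max (|S| - lam) 0 / a) ^ 2
      - S * (Real.sign S * max (|S| - lam) 0 / a)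
      + lam * |Real.sign S * max (|S| - lam) 0 / a|
      + a / 2 * (β - Real.sign S * max (|S| - lam) 0 / a) ^ 2
    ≤ a / 2 * β ^ 2 - S * β + lam * |β| := by
  set b := Real.sign S * max (|S| - lam) 0 / a with hb
  rcases le_or_gt (|S|) lam with h | h
  · have hmax : max (|S| - lam) 0 = 0 := max_eq_right (by linarith)
    have hb0 : b = 0 := by rw [hb, hmax]; ring
    rw [hb0]
    have h1 : S * β ≤ |S| * |β| := by
      calc S * β ≤ |S * β| := le_abs_self _
      _ = |S| * |β| := abs_mul _ _
    have h2 : |S| * |β| ≤ lam * |β| := by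
      apply mul_le_mul_of_nonneg_right h (abs_nonneg β)
    simp only [abs_zero]
    nlinarith
  · rcases lt_trichotomy S 0 with hS | hS | hS
    · have hsign : Real.sign S = -1 := Real.sign_of_neg hS
      have habs : |S| = -S := abs_of_neg hS
      have hmax : max (|S| - lam) 0 = -S - lam := by
        rw [habs]; exact max_eq_left (by linarith)
      have hbv : b = (S + lam) / a := by rw [hb, hsign, hmax]; ring
      have hbneg : b ≤ 0 := by
        rw [hbv]
        apply div_nonpos_of_nonpos_of_nonneg _ ha.le
        rw [habs] at h; linarith
      have hab : a * b = S + lam := by rw [hbv]; field_simp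
      have habsb : |b| = -b := abs_of_nonpos hbneg
      rw [habsb]
      have h3 : a * (b * β) = (S + lam) * β := by rw [← mul_assoc, hab]
      have h4 : a * (b * b) = (S + lam) * b := by rw [← mul_assoc, hab]
      nlinarith [h3, h4, mul_nonneg hlam (by linarith [neg_abs_le β] : (0:ℝ) ≤ |β| + β)]
    · exfalso; rw [hS, abs_zero] at h; linarith
    · have hsign : Real.sign S = 1 := Real.sign_of_pos hS
      have habs : |S| = S := abs_of_pos hS
      have hmax : max (|S| - lam) 0 = S - lam := by
        rw [habs]; exact max_eq_left (by rw [habs] at h; linarith)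
      have hbv : b = (S - lam) / a := by rw [hb, hsign, hmax]; ring
      have hbpos : 0 ≤ b := by
        rw [hbv]
        apply div_nonneg _ ha.le
        rw [habs] at h; linarith
      have hab : a * b = S - lam := by rw [hbv]; field_simp
      have habsb : |b| = b := abs_of_nonneg hbpos
      rw [habsb]
      have h3 : a * (b * β) = (S - lam) * β := by rw [← mul_assoc, hab]
      have h4 : a * (b * b) = (S - lam) * b := by rw [← mul_assoc, hab]
      nlinarith [h3, h4, mul_nonneg hlam (by linarith [le_abs_self β] : (0:ℝ) ≤ |β| - β)]

/-- `f(β) = (a/2)β² − Sβ + λ|β|` has the unique global minimizer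
`β̂ = sgn(S)·(|S| − λ)₊ / a` (soft-thresholding). -/
theorem soft_threshold_unique_minimizer
    (a lam S : ℝ) (ha : 0 < a) (hlam : 0 ≤ lam)
    (f : ℝ → ℝ) (hf : ∀ β, f β = a / 2 * β ^ 2 - S * β + lam * |β|) :
    (∀ β, f (Real.sign S * max (|S| - lam) 0 / a) ≤ f β) ∧
    (∀ β, (∀ β', f β ≤ f β') → β = Real.sign S * max (|S| - lam) 0 / a) := by
  have key := soft_key a lam S ha hlam
  constructor
  · intro β
    rw [hf, hf]
    nlinarith [key β, sq_nonneg (β - Real.sign S * max (|S| - lam) 0 / a)]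
  · intro β hmin
    have h1 := hmin (Real.sign S * max (|S| - lam) 0 / a)
    rw [hf, hf] at h1
    have h2 := key β
    have hsq : (β - Real.sign S * max (|S| - lam) 0 / a) ^ 2 ≤ 0 := by nlinarith
    have h0 : (β - Real.sign S * max (|S| - lam) 0 / a) ^ 2 = 0 :=
      le_antisymm hsq (sq_nonneg _)
    have := pow_eq_zero_iff (two_ne_zero) |>.mp h0
    linarith [sub_eq_zero.mp this]
end

section
/- Suppose x ≠ 0 and 0 < t ≤ n/‖x‖₂². Then for all real β and β₀, the majorization inequality l(β) ≤ l(β₀) + (β − β₀) · l'(β₀) + (1/(2t)) (β − β₀)² holds. -/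
open Finset

/-! The loss is a quadratic in `β` with leading coefficient `‖x‖₂² / (2n)`, so its second-order
Taylor expansion at `β₀` is exact; the step-size condition `t ≤ n / ‖x‖₂²` says precisely that
this curvature is at most `1 / (2t)`. -/

theorem sum_sq_sub_mul_eq_taylor {ι : Type*} [Fintype ι] (r x : ι → ℝ) (β β₀ : ℝ) :
    ∑ i, (r i - x i * β) ^ 2 = ∑ i, (r i - x i * β₀) ^ 2
      - 2 * (β - β₀) * ∑ i, x i * (r i - x i * β₀) + (∑ i, x i ^ 2) * (β - β₀) ^ 2 := by
  rw [mul_sum, sum_mul, ← sum_sub_distrib, ← sum_add_distrib]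
  exact sum_congr rfl fun i _ => by ring

theorem quadratic_loss_majorization_general
    (n : ℕ) (r x : Fin n → ℝ)
    (t : ℝ) (ht : 0 < t) (ht' : t ≤ (n : ℝ) / ∑ i, (x i) ^ 2)
    (l : ℝ → ℝ) (hl : ∀ β, l β = 1 / (2 * (n : ℝ)) * ∑ i, (r i - x i * β) ^ 2)
    (l' : ℝ → ℝ) (hl' : ∀ β, l' β = -(1 / (n : ℝ)) * ∑ i, x i * (r i - x i * β))
    (β β₀ : ℝ) :
    l β ≤ l β₀ + (β - β₀) * l' β₀ + 1 / (2 * t) * (β - β₀) ^ 2 := by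
  have hcurv : (∑ i, x i ^ 2) / n ≤ 1 / t := by
    simpa only [one_div_div] using one_div_le_one_div_of_le ht ht'
  rw [hl, hl, hl', sum_sq_sub_mul_eq_taylor r x β β₀]
  linear_combination (1 / 2 : ℝ) * mul_le_mul_of_nonneg_right hcurv (sq_nonneg (β - β₀))

/-- majorization of the quadratic loss `l(β) = (1/(2n))‖r − xβ‖₂²`
by its first-order expansion plus `(1/(2t))(β − β₀)²`, valid whenever
`0 < t ≤ n/‖x‖₂²`. -/
theorem quadratic_loss_majorization
    (n : ℕ) (hn : 0 < n) (r x : Fin n → ℝ) (hx : x ≠ 0)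
    (t : ℝ) (ht : 0 < t) (ht' : t ≤ (n : ℝ) / ∑ i, (x i) ^ 2)
    (l : ℝ → ℝ) (hl : ∀ β, l β = 1 / (2 * (n : ℝ)) * ∑ i, (r i - x i * β) ^ 2)
    (l' : ℝ → ℝ) (hl' : ∀ β, l' β = -(1 / (n : ℝ)) * ∑ i, x i * (r i - x i * β))
    (β β₀ : ℝ) :
    l β ≤ l β₀ + (β - β₀) * l' β₀ + 1 / (2 * t) * (β - β₀) ^ 2 :=
  quadratic_loss_majorization_general n r x t ht ht' l hl l' hl' β β₀
end

section
/- If β̂ ∈ ℝ^d is a global minimizer of f with β̂ ≠ 0, then (1 + tμ/‖β̂‖₂) · β̂ = S(z, tλ) (as vectors in ℝ^d), and consequently ‖β̂‖₂ = ‖S(z, tλ)‖₂ − tμ. -/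
/-!
Write `s = S(z, tλ)` and `x = (1 - tμ/‖s‖)₊ s`. Coordinatewise, `z - s` is a subgradient of
`tλ‖·‖₁` at `s`, hence at every nonnegative multiple of `s`, and `s - x` is a subgradient of
`tμ‖·‖₂` at `x`; so `z - x` is a subgradient of `t(λ‖·‖₁ + μ‖·‖₂)` at `x`. Adding the quadratic
`(1/2t)‖· - z‖²` gives `f β ≥ f x + (1/2t)‖β - x‖²`, so `x` is the unique minimizer. Then
`β̂ = x ≠ 0` forces `‖s‖ > tμ`, and both identities are read off `x = (1 - tμ/‖s‖) s`.
-/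

open Finset
open scoped RealInnerProductSpace

section BlockSoftThreshold

variable {E : Type*} [NormedAddCommGroup E] [InnerProductSpace ℝ E] {c : ℝ} {v : E}

/-- The proximal map of `c ‖·‖`. -/
noncomputable def blockSoftThreshold (c : ℝ) (v : E) : E := max 0 (1 - c / ‖v‖) • v

theorem blockSoftThreshold_of_norm_le (h : ‖v‖ ≤ c) : blockSoftThreshold c v = 0 := by
  rcases eq_or_ne v 0 with rfl | hv
  · exact smul_zero _
  · have : 1 ≤ c / ‖v‖ := (one_le_div₀ (norm_pos_iff.2 hv)).2 h
    rw [blockSoftThreshold, max_eq_left (by linarith), zero_smul]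

theorem blockSoftThreshold_of_lt_norm (h : c < ‖v‖) :
    blockSoftThreshold c v = (1 - c / ‖v‖) • v := by
  rw [blockSoftThreshold, max_eq_right (sub_nonneg.2 (div_le_one_of_le₀ h.le (norm_nonneg v)))]

theorem norm_blockSoftThreshold_of_lt_norm (hc : 0 ≤ c) (h : c < ‖v‖) :
    ‖blockSoftThreshold c v‖ = ‖v‖ - c := by
  have hv : ‖v‖ ≠ 0 := (hc.trans_lt h).ne'
  rw [blockSoftThreshold_of_lt_norm h, norm_smul, Real.norm_eq_abs,
    abs_of_nonneg (sub_nonneg.2 (div_le_one_of_le₀ h.le (norm_nonneg v)))]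
  field_simp

theorem lt_norm_of_blockSoftThreshold_ne_zero (h : blockSoftThreshold c v ≠ 0) : c < ‖v‖ :=
  lt_of_not_ge fun hle => h (blockSoftThreshold_of_norm_le hle)

theorem norm_sub_blockSoftThreshold_le (hc : 0 ≤ c) : ‖v - blockSoftThreshold c v‖ ≤ c := by
  rcases le_or_gt ‖v‖ c with h | h
  · rwa [blockSoftThreshold_of_norm_le h, sub_zero]
  · rw [blockSoftThreshold_of_lt_norm h, sub_smul, one_smul, sub_sub_cancel, norm_smul,
      Real.norm_eq_abs, abs_of_nonneg (by positivity), div_mul_cancel₀ c (hc.trans_lt h).ne']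

theorem inner_sub_blockSoftThreshold_self (hc : 0 ≤ c) :
    ⟪v - blockSoftThreshold c v, blockSoftThreshold c v⟫ = c * ‖blockSoftThreshold c v‖ := by
  rcases le_or_gt ‖v‖ c with h | h
  · simp [blockSoftThreshold_of_norm_le h]
  · have hv : ‖v‖ ≠ 0 := (hc.trans_lt h).ne'
    rw [norm_blockSoftThreshold_of_lt_norm hc h, blockSoftThreshold_of_lt_norm h, sub_smul,
      one_smul, sub_sub_cancel, real_inner_smul_left, inner_sub_right, real_inner_smul_right,
      real_inner_self_eq_norm_sq]
    field_simp

theorem norm_blockSoftThreshold (hc : 0 ≤ c) (h : blockSoftThreshold c v ≠ 0) :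
    ‖blockSoftThreshold c v‖ = ‖v‖ - c :=
  norm_blockSoftThreshold_of_lt_norm hc (lt_norm_of_blockSoftThreshold_ne_zero h)

theorem one_add_div_norm_smul_blockSoftThreshold (hc : 0 ≤ c) (h : blockSoftThreshold c v ≠ 0) :
    (1 + c / ‖blockSoftThreshold c v‖) • blockSoftThreshold c v = v := by
  have hcv := lt_norm_of_blockSoftThreshold_ne_zero h
  have hv : ‖v‖ ≠ 0 := (hc.trans_lt hcv).ne'
  have : ‖v‖ - c ≠ 0 := (sub_pos.2 hcv).ne'
  rw [norm_blockSoftThreshold hc h, blockSoftThreshold_of_lt_norm hcv, smul_smul,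
    show (1 + c / (‖v‖ - c)) * (1 - c / ‖v‖) = 1 by field_simp; ring, one_smul]

theorem inner_sub_le_of_norm_le_of_inner_eq {w x : E} (hw : ‖w‖ ≤ c) (hwx : ⟪w, x⟫ = c * ‖x‖)
    (y : E) : ⟪w, y - x⟫ ≤ c * (‖y‖ - ‖x‖) := by
  have := (real_inner_le_norm w y).trans (mul_le_mul_of_nonneg_right hw (norm_nonneg y))
  rw [inner_sub_right, hwx]
  linarith

theorem inner_sub_blockSoftThreshold_le (hc : 0 ≤ c) (y : E) :
    ⟪v - blockSoftThreshold c v, y - blockSoftThreshold c v⟫ ≤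
      c * (‖y‖ - ‖blockSoftThreshold c v‖) :=
  inner_sub_le_of_norm_le_of_inner_eq (norm_sub_blockSoftThreshold_le hc)
    (inner_sub_blockSoftThreshold_self hc) y

end BlockSoftThreshold

theorem Real.sign_mul_max_abs_sub_eq_blockSoftThreshold (c z : ℝ) :
    Real.sign z * max (|z| - c) 0 = blockSoftThreshold c z := by
  rcases eq_or_ne z 0 with rfl | hz
  · simp [blockSoftThreshold]
  · have hz' : 0 < |z| := abs_pos.2 hz
    have hsign : Real.sign z * |z| = z := by
      rcases hz.lt_or_gt with h | h
      · rw [Real.sign_of_neg h, abs_of_neg h, neg_one_mul, neg_neg]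
      · rw [Real.sign_of_pos h, abs_of_pos h, one_mul]
    rw [blockSoftThreshold, Real.norm_eq_abs, smul_eq_mul]
    calc Real.sign z * max (|z| - c) 0 = Real.sign z * (max 0 (1 - c / |z|) * |z|) := by
          rw [max_mul_of_nonneg _ _ hz'.le, zero_mul, sub_mul, one_mul,
            div_mul_cancel₀ c hz'.ne', max_comm]
      _ = max 0 (1 - c / |z|) * z := by rw [mul_left_comm, hsign]

theorem inner_sub_le_of_abs_le_of_mul_eq {ι : Type*} [Fintype ι] {w x : EuclideanSpace ℝ ι}
    {c : ℝ} (hw : ∀ i, |w i| ≤ c) (hwx : ∀ i, w i * x i = c * |x i|) (y : EuclideanSpace ℝ ι) :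
    ⟪w, y - x⟫ ≤ c * (∑ i, |y i| - ∑ i, |x i|) := by
  rw [PiLp.inner_apply, mul_sub, mul_sum, mul_sum, ← sum_sub_distrib]
  refine sum_le_sum fun i _ => ?_
  simpa only [Real.norm_eq_abs, PiLp.sub_apply, mul_sub] using
    inner_sub_le_of_norm_le_of_inner_eq (E := ℝ) (hw i)
      (by rw [Real.inner_apply]; exact hwx i) (y i)

theorem inner_sub_blockSoftThreshold_le_of_eq_softThreshold {ι : Type*} [Fintype ι]
    {z soft : EuclideanSpace ℝ ι} {a b : ℝ} (ha : 0 ≤ a) (hb : 0 ≤ b)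
    (hsoft : ∀ i, soft i = Real.sign (z i) * max (|z i| - a) 0) (y : EuclideanSpace ℝ ι) :
    ⟪z - blockSoftThreshold b soft, y - blockSoftThreshold b soft⟫ ≤
      a * (∑ i, |y i| - ∑ i, |blockSoftThreshold b soft i|) +
        b * (‖y‖ - ‖blockSoftThreshold b soft‖) := by
  have hsoft' : ∀ i, soft i = blockSoftThreshold a (z i) := fun i => by
    rw [hsoft i, Real.sign_mul_max_abs_sub_eq_blockSoftThreshold]
  have hw : ∀ i, |z i - soft i| ≤ a := fun i => by
    simpa only [hsoft', Real.norm_eq_abs] using norm_sub_blockSoftThreshold_le (v := z i) ha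
  have hws : ∀ i, (z i - soft i) * soft i = a * |soft i| := fun i => by
    simpa only [hsoft', Real.norm_eq_abs, Real.inner_apply] using
      inner_sub_blockSoftThreshold_self (v := z i) ha
  have hwx : ∀ i, (z i - soft i) * blockSoftThreshold b soft i =
      a * |blockSoftThreshold b soft i| := fun i => by
    have hα : 0 ≤ max 0 (1 - b / ‖soft‖) := le_max_left _ _
    rw [blockSoftThreshold, PiLp.smul_apply, smul_eq_mul, abs_mul, abs_of_nonneg hα,
      mul_left_comm, hws, mul_left_comm]
  calc ⟪z - blockSoftThreshold b soft, y - blockSoftThreshold b soft⟫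
      = ⟪z - soft, y - blockSoftThreshold b soft⟫ +
          ⟪soft - blockSoftThreshold b soft, y - blockSoftThreshold b soft⟫ := by
        rw [← inner_add_left, sub_add_sub_cancel]
    _ ≤ _ := add_le_add (inner_sub_le_of_abs_le_of_mul_eq hw hwx y)
        (inner_sub_blockSoftThreshold_le hb y)

section ProximalQuadraticGrowth

variable {E : Type*} [NormedAddCommGroup E] [InnerProductSpace ℝ E] {f h : E → ℝ} {z x : E}
  {t : ℝ}

theorem add_sq_norm_sub_le_of_inner_sub_le (ht : 0 < t)
    (hf : ∀ y, f y = 1 / (2 * t) * ‖y - z‖ ^ 2 + h y)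
    (hsub : ∀ y, ⟪z - x, y - x⟫ ≤ t * (h y - h x)) (y : E) :
    f x + 1 / (2 * t) * ‖y - x‖ ^ 2 ≤ f y := by
  have hexp : ‖y - z‖ ^ 2 = ‖y - x‖ ^ 2 - 2 * ⟪z - x, y - x⟫ + ‖x - z‖ ^ 2 := by
    rw [show y - z = (y - x) - (z - x) by abel, norm_sub_sq_real, ← norm_neg (x - z),
      neg_sub, real_inner_comm]
  have hdiv : ⟪z - x, y - x⟫ / t ≤ h y - h x := (div_le_iff₀' ht).2 (hsub y)
  have hcoef : 1 / (2 * t) * (2 * ⟪z - x, y - x⟫) = ⟪z - x, y - x⟫ / t := by field_simp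
  rw [hf, hf, hexp]
  linarith

theorem eq_of_forall_le_of_inner_sub_le (ht : 0 < t)
    (hf : ∀ y, f y = 1 / (2 * t) * ‖y - z‖ ^ 2 + h y)
    (hsub : ∀ y, ⟪z - x, y - x⟫ ≤ t * (h y - h x)) {x' : E} (hmin : ∀ y, f x' ≤ f y) :
    x' = x := by
  have hle : 1 / (2 * t) * ‖x' - x‖ ^ 2 ≤ 0 := by
    linarith [add_sq_norm_sub_le_of_inner_sub_le ht hf hsub x', hmin x]
  have : ‖x' - x‖ ^ 2 ≤ 0 := nonpos_of_mul_nonpos_right hle (by positivity)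
  simpa [sub_eq_zero] using this

end ProximalQuadraticGrowth

/-- a nonzero global minimizer `β̂` of
`f(β) = (1/(2t))‖β − z‖₂² + λ‖β‖₁ + μ‖β‖₂` satisfies
`(1 + tμ/‖β̂‖₂) β̂ = S(z, tλ)` and `‖β̂‖₂ = ‖S(z, tλ)‖₂ − tμ`. -/
theorem nonzero_minimizer_soft_threshold_equation
    (d : ℕ) (z : EuclideanSpace ℝ (Fin d)) (t lam mu : ℝ)
    (ht : 0 < t) (hlam : 0 ≤ lam) (hmu : 0 ≤ mu)
    (f : EuclideanSpace ℝ (Fin d) → ℝ)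
    (hf : ∀ β, f β = 1 / (2 * t) * ‖β - z‖ ^ 2 + lam * ∑ i, |β i| + mu * ‖β‖)
    (soft : EuclideanSpace ℝ (Fin d))
    (hsoft : ∀ i, soft i = Real.sign (z i) * max (|z i| - t * lam) 0)
    (βhat : EuclideanSpace ℝ (Fin d))
    (hmin : ∀ β, f βhat ≤ f β) (hne : βhat ≠ 0) :
    (1 + t * mu / ‖βhat‖) • βhat = soft ∧ ‖βhat‖ = ‖soft‖ - t * mu := by
  set x := blockSoftThreshold (t * mu) soft
  have htmu : 0 ≤ t * mu := mul_nonneg ht.le hmu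
  have hf' : ∀ β, f β = 1 / (2 * t) * ‖β - z‖ ^ 2 + (lam * ∑ i, |β i| + mu * ‖β‖) := fun β => by
    rw [hf, add_assoc]
  have hsub : ∀ β, ⟪z - x, β - x⟫ ≤
      t * ((lam * ∑ i, |β i| + mu * ‖β‖) - (lam * ∑ i, |x i| + mu * ‖x‖)) := fun β => by
    have := inner_sub_blockSoftThreshold_le_of_eq_softThreshold
      (mul_nonneg ht.le hlam) htmu hsoft β
    linarith
  obtain rfl : βhat = x := eq_of_forall_le_of_inner_sub_le ht hf' hsub hmin
  exact ⟨one_add_div_norm_smul_blockSoftThreshold htmu hne, norm_blockSoftThreshold htmu hne⟩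
end

section
/- If ‖S(z, tλ)‖₂ > tμ, then the vector β̂ = (1 − tμ/‖S(z, tλ)‖₂) · S(z, tλ) is the unique global minimizer of f. -/
/-! Write `S = S(z, tλ)` and `β̂ = (1 - tμ/‖S‖) • S`. Then `z - β̂ = (z - S) + (tμ/‖S‖) • S`, and
both pieces are subgradients at `β̂` (scaled by `t`): `|zᵢ - Sᵢ| ≤ tλ` with `(zᵢ - Sᵢ) Sᵢ = tλ |Sᵢ|`,
so `z - S ∈ tλ ∂‖·‖₁(β̂)` since `β̂` is a nonnegative multiple of `S`, and `S/‖S‖ ∈ ∂‖·‖₂(β̂)`.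
As the quadratic term is `1/t`-strongly convex, this gives `f β̂ + ‖β - β̂‖²/(2t) ≤ f β`. -/

open Finset

section InnerProductSpace

variable {E : Type*} [NormedAddCommGroup E] [InnerProductSpace ℝ E]

lemma add_sq_norm_sub_le_of_inner_le {g : E → ℝ} {z b : E} {t : ℝ} (ht : 0 < t)
    (hsub : ∀ β, inner ℝ (z - b) (β - b) ≤ t * (g β - g b)) (β : E) :
    1 / (2 * t) * ‖b - z‖ ^ 2 + g b + 1 / (2 * t) * ‖β - b‖ ^ 2
      ≤ 1 / (2 * t) * ‖β - z‖ ^ 2 + g β := by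
  have hexpand : ‖β - z‖ ^ 2 = ‖β - b‖ ^ 2 - 2 * inner ℝ (z - b) (β - b) + ‖b - z‖ ^ 2 := by
    rw [show β - z = (β - b) - (z - b) by abel, norm_sub_sq_real, real_inner_comm,
      norm_sub_rev z b]
  have hβ := hsub β
  rw [hexpand]
  field_simp
  nlinarith

lemma isUniqueMin_of_inner_le {g : E → ℝ} {z b : E} {t : ℝ} (ht : 0 < t)
    (hsub : ∀ β, inner ℝ (z - b) (β - b) ≤ t * (g β - g b)) :
    (∀ β, 1 / (2 * t) * ‖b - z‖ ^ 2 + g b ≤ 1 / (2 * t) * ‖β - z‖ ^ 2 + g β) ∧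
    (∀ β, (∀ β', 1 / (2 * t) * ‖β - z‖ ^ 2 + g β ≤ 1 / (2 * t) * ‖β' - z‖ ^ 2 + g β') →
      β = b) := by
  have hgrowth := add_sq_norm_sub_le_of_inner_le ht hsub
  have hdist (β : E) : 0 ≤ 1 / (2 * t) * ‖β - b‖ ^ 2 := by positivity
  refine ⟨fun β => by linarith [hgrowth β, hdist β], fun β hmin => ?_⟩
  have hzero : 1 / (2 * t) * ‖β - b‖ ^ 2 = 0 := by linarith [hgrowth β, hmin b, hdist β]
  simpa [ht.ne', sub_eq_zero] using hzero

lemma real_inner_sub_smul_le (s β : E) {a : ℝ} (ha : 0 ≤ a) :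
    inner ℝ s (β - a • s) ≤ ‖s‖ * (‖β‖ - ‖a • s‖) := by
  rw [inner_sub_right, real_inner_smul_right, real_inner_self_eq_norm_sq, norm_smul,
    Real.norm_of_nonneg ha]
  nlinarith [real_inner_le_norm s β]

end InnerProductSpace

lemma abs_sub_sign_mul_max_sub_le (x : ℝ) {c : ℝ} (hc : 0 ≤ c) :
    |x - Real.sign x * max (|x| - c) 0| ≤ c := by
  rcases lt_trichotomy x 0 with hx | rfl | hx
  · rw [Real.sign_of_neg hx, abs_of_neg hx, abs_le]
    constructor <;> cases max_cases (-x - c) 0 <;> linarith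
  · simpa using hc
  · rw [Real.sign_of_pos hx, abs_of_pos hx, abs_le]
    constructor <;> cases max_cases (x - c) 0 <;> linarith

lemma sub_sign_mul_max_sub_mul_self (x c : ℝ) :
    (x - Real.sign x * max (|x| - c) 0) * (Real.sign x * max (|x| - c) 0)
      = c * |Real.sign x * max (|x| - c) 0| := by
  rcases lt_trichotomy x 0 with hx | rfl | hx
  · rw [Real.sign_of_neg hx, abs_of_neg hx]
    rcases max_cases (-x - c) 0 with ⟨h, _⟩ | ⟨h, _⟩ <;> rw [h]
    · rw [abs_of_nonpos (by linarith)]; ring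
    · simp
  · simp
  · rw [Real.sign_of_pos hx, abs_of_pos hx]
    rcases max_cases (x - c) 0 with ⟨h, _⟩ | ⟨h, _⟩ <;> rw [h]
    · rw [abs_of_nonneg (by linarith)]; ring
    · simp

lemma inner_sub_softThreshold_le {ι : Type*} [Fintype ι] {z s : EuclideanSpace ℝ ι} {c : ℝ}
    (hc : 0 ≤ c) (hs : ∀ i, s i = Real.sign (z i) * max (|z i| - c) 0)
    (β : EuclideanSpace ℝ ι) {a : ℝ} (ha : 0 ≤ a) :
    inner ℝ (z - s) (β - a • s) ≤ c * (∑ i, |β i| - ∑ i, |(a • s) i|) := by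
  rw [PiLp.inner_apply, mul_sub, mul_sum, mul_sum, ← sum_sub_distrib]
  refine sum_le_sum fun i _ => ?_
  have hsub : |z i - s i| ≤ c := hs i ▸ abs_sub_sign_mul_max_sub_le (z i) hc
  have hself : (z i - s i) * s i = c * |s i| := hs i ▸ sub_sign_mul_max_sub_mul_self (z i) c
  have hβ : (z i - s i) * β i ≤ c * |β i| :=
    (le_abs_self _).trans ((abs_mul _ _).trans_le (mul_le_mul_of_nonneg_right hsub (abs_nonneg _)))
  simp only [PiLp.sub_apply, PiLp.smul_apply, smul_eq_mul, RCLike.inner_apply, conj_trivial,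
    abs_mul, abs_of_nonneg ha]
  linear_combination hβ - a * hself

lemma inner_sub_smul_softThreshold_le {ι : Type*} [Fintype ι] {z s : EuclideanSpace ℝ ι}
    {c κ : ℝ} (hc : 0 ≤ c) (hs : ∀ i, s i = Real.sign (z i) * max (|z i| - c) 0)
    (hκ : 0 ≤ κ) (hκs : κ < ‖s‖) (β : EuclideanSpace ℝ ι) :
    inner ℝ (z - (1 - κ / ‖s‖) • s) (β - (1 - κ / ‖s‖) • s)
      ≤ c * (∑ i, |β i| - ∑ i, |((1 - κ / ‖s‖) • s) i|)
        + κ * (‖β‖ - ‖(1 - κ / ‖s‖) • s‖) := by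
  have hs0 : 0 < ‖s‖ := hκ.trans_lt hκs
  have ha : 0 ≤ 1 - κ / ‖s‖ := sub_nonneg.mpr ((div_le_one hs0).mpr hκs.le)
  have hsplit : z - (1 - κ / ‖s‖) • s = (z - s) + (κ / ‖s‖) • s := by module
  have hgroup : (κ / ‖s‖) * inner ℝ s (β - (1 - κ / ‖s‖) • s)
      ≤ (κ / ‖s‖) * (‖s‖ * (‖β‖ - ‖(1 - κ / ‖s‖) • s‖)) :=
    mul_le_mul_of_nonneg_left (real_inner_sub_smul_le s β ha) (by positivity)
  rw [hsplit, inner_add_left, real_inner_smul_left]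
  rw [← mul_assoc, div_mul_cancel₀ κ hs0.ne'] at hgroup
  linarith [inner_sub_softThreshold_le hc hs β ha]

/-- if `‖S(z, tλ)‖₂ > tμ`, the vector
`β̂ = (1 − tμ/‖S(z, tλ)‖₂) S(z, tλ)` is the unique global minimizer of
`f(β) = (1/(2t))‖β − z‖₂² + λ‖β‖₁ + μ‖β‖₂`. -/
theorem soft_threshold_group_update_unique_minimizer
    (d : ℕ) (z : EuclideanSpace ℝ (Fin d)) (t lam mu : ℝ)
    (ht : 0 < t) (hlam : 0 ≤ lam) (hmu : 0 ≤ mu)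
    (f : EuclideanSpace ℝ (Fin d) → ℝ)
    (hf : ∀ β, f β = 1 / (2 * t) * ‖β - z‖ ^ 2 + lam * ∑ i, |β i| + mu * ‖β‖)
    (soft : EuclideanSpace ℝ (Fin d))
    (hsoft : ∀ i, soft i = Real.sign (z i) * max (|z i| - t * lam) 0)
    (hbig : t * mu < ‖soft‖) :
    (∀ β, f ((1 - t * mu / ‖soft‖) • soft) ≤ f β) ∧
    (∀ β, (∀ β', f β ≤ f β') → β = (1 - t * mu / ‖soft‖) • soft) := by
  set b := (1 - t * mu / ‖soft‖) • soft
  set g : EuclideanSpace ℝ (Fin d) → ℝ := fun β => lam * ∑ i, |β i| + mu * ‖β‖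
  have hsub (β : EuclideanSpace ℝ (Fin d)) : inner ℝ (z - b) (β - b) ≤ t * (g β - g b) :=
    (inner_sub_smul_softThreshold_le (mul_nonneg ht.le hlam) hsoft (mul_nonneg ht.le hmu)
      hbig β).trans_eq (by ring)
  simpa only [hf, add_assoc] using isUniqueMin_of_inner_le ht hsub
end
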